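/- arXiv:2603.06851 — 3 statements merged into one kernel-verified Lean document; each statement's English description precedes it below -/
import Mathlib

section
/- Let ξ and ζ be independent real-valued random variables with E[ξ] = E[ζ] = 0, E[|ξ|] < ∞, E[|ζ|] < ∞, and suppose ξ and ζ have Lebesgue densities f_ξ and f_ζ that are bounded above by a constant L ≥ 1. Then for every m ∈ ℝ and every π ∈ ℝ, with V = m + ξ and W = m + ζ, one has E[g(m, V, W)] − E[g(π, V, W)] ≤ L·(m − π)². -/
/-!
Off the null events `ξ = p` and `ζ = p`, `g(p, v, w) = (v - w)(1{w ≤ p} - 1{v ≤ p})`.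
Independence and zero means kill the cross terms, so `E g(p, ξ, ζ) = -E[ξ; ξ ≤ p] - E[ζ; ζ ≤ p]`.
The regret at price `m + c` is then `∫_0^c x dP_ξ + ∫_0^c x dP_ζ`, and since each law is
dominated by `L` times Lebesgue measure, each term is at most `L ∫_{Ι 0 c} |x| dx = L c² / 2`.
-/

open MeasureTheory ProbabilityTheory

/-- The gain from trade: `g p v w = (max v w - min v w) · 1{min v w ≤ p ≤ max v w}`. -/
noncomputable def gft (p v w : ℝ) : ℝ :=
  if min v w ≤ p ∧ p ≤ max v w then max v w - min v w else 0

open Set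
open scoped Interval

lemma gft_add_add (p a v w : ℝ) : gft p (a + v) (a + w) = gft (p - a) v w := by
  simp only [gft, min_add_add_left, max_add_add_left, add_sub_add_left_eq_sub, le_sub_iff_add_le',
    sub_le_iff_le_add']

lemma gft_eq_of_ne {p v w : ℝ} (hv : v ≠ p) (hw : w ≠ p) :
    gft p v w = v * (Iic p).indicator 1 w + w * (Iic p).indicator 1 v
      - (Iic p).indicator id v - (Iic p).indicator id w := by
  simp only [gft, indicator_apply, mem_Iic, Pi.one_apply, id]
  grind

section

variable {Ω : Type*} [MeasurableSpace Ω] {μ : Measure Ω} {X Y : Ω → ℝ}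

lemma ae_ne_of_map_le_smul_volume (hX : AEMeasurable X μ) {c : ENNReal}
    (h : μ.map X ≤ c • volume) (p : ℝ) :
    ∀ᵐ ω ∂μ, X ω ≠ p :=
  ae_of_ae_map hX ((Measure.absolutelyContinuous_of_le_smul h).ae_le (volume.ae_ne p))

lemma integral_indicator_Iic_comp (hX : Measurable X) (p : ℝ) :
    ∫ ω, (Iic p).indicator id (X ω) ∂μ = ∫ x in Iic p, x ∂μ.map X := by
  rw [← integral_indicator measurableSet_Iic]
  exact (integral_map hX.aemeasurable
    (measurable_id.indicator measurableSet_Iic).aestronglyMeasurable).symm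

lemma ProbabilityTheory.IndepFun.integral_mul_indicator_comp_eq_zero (hXY : IndepFun X Y μ)
    (hX : Measurable X) (hY : Measurable Y) (hXmean : ∫ ω, X ω ∂μ = 0) {s : Set ℝ}
    (hs : MeasurableSet s) :
    ∫ ω, X ω * s.indicator 1 (Y ω) ∂μ = 0 := by
  simpa [hXmean] using hXY.integral_fun_comp_mul_comp (f := id) hX.aemeasurable hY.aemeasurable
    aestronglyMeasurable_id (measurable_one.indicator hs).aestronglyMeasurable

lemma ProbabilityTheory.IndepFun.integral_gft (hXY : IndepFun X Y μ) (hX : Measurable X)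
    (hY : Measurable Y) (hXi : Integrable X μ) (hYi : Integrable Y μ)
    (hXmean : ∫ ω, X ω ∂μ = 0) (hYmean : ∫ ω, Y ω ∂μ = 0) {p : ℝ}
    (hXp : ∀ᵐ ω ∂μ, X ω ≠ p) (hYp : ∀ᵐ ω ∂μ, Y ω ≠ p) :
    ∫ ω, gft p (X ω) (Y ω) ∂μ = -∫ x in Iic p, x ∂μ.map X - ∫ y in Iic p, y ∂μ.map Y := by
  have hmul : ∀ {Z W : Ω → ℝ}, Integrable Z μ → Measurable W →
      Integrable (fun ω => Z ω * (Iic p).indicator 1 (W ω)) μ := fun hZ hW =>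
    hZ.mul_bdd ((measurable_one.indicator measurableSet_Iic).comp hW).aestronglyMeasurable
      (c := 1) (ae_of_all _ fun _ => by
        simpa using norm_indicator_le_norm_self (s := Iic p) (f := (1 : ℝ → ℝ)) _)
  have htrunc : ∀ {Z : Ω → ℝ}, Integrable Z μ → Measurable Z →
      Integrable (fun ω => (Iic p).indicator id (Z ω)) μ := fun hZ hZm =>
    (((integrable_map_measure aestronglyMeasurable_id hZm.aemeasurable).2 hZ).indicator
      measurableSet_Iic).comp_measurable hZm
  calc ∫ ω, gft p (X ω) (Y ω) ∂μ
      = ∫ ω, (X ω * (Iic p).indicator 1 (Y ω) + Y ω * (Iic p).indicator 1 (X ω)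
          - (Iic p).indicator id (X ω) - (Iic p).indicator id (Y ω)) ∂μ := by
        refine integral_congr_ae ?_
        filter_upwards [hXp, hYp] with ω hXω hYω using gft_eq_of_ne hXω hYω
    _ = _ := by
      rw [integral_sub ?_ (htrunc hYi hY), integral_sub ?_ (htrunc hXi hX),
        integral_add (hmul hXi hY) (hmul hYi hX),
        hXY.integral_mul_indicator_comp_eq_zero hX hY hXmean measurableSet_Iic,
        hXY.symm.integral_mul_indicator_comp_eq_zero hY hX hYmean measurableSet_Iic,
        integral_indicator_Iic_comp hX, integral_indicator_Iic_comp hY]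
      · ring
      · exact (hmul hXi hY).add (hmul hYi hX)
      · exact ((hmul hXi hY).add (hmul hYi hX)).sub (htrunc hXi hX)

end

lemma withDensity_ofReal_le_smul {α : Type*} [MeasurableSpace α] {μ : Measure α} {f : α → ℝ}
    {L : ℝ} (hf : ∀ x, f x ≤ L) :
    μ.withDensity (fun x => ENNReal.ofReal (f x)) ≤ ENNReal.ofReal L • μ := by
  rw [← withDensity_const]
  exact withDensity_mono (ae_of_all _ fun x => ENNReal.ofReal_le_ofReal (hf x))

lemma integral_abs_uIoc_zero (c : ℝ) : ∫ x in Ι 0 c, |x| = c ^ 2 / 2 := by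
  rcases le_total 0 c with hc | hc
  · rw [uIoc_of_le hc, ← intervalIntegral.integral_of_le hc,
      intervalIntegral.integral_congr fun x hx => abs_of_nonneg (uIcc_of_le hc ▸ hx).1, integral_id]
    ring
  · rw [uIoc_of_ge hc, ← intervalIntegral.integral_of_le hc,
      intervalIntegral.integral_congr fun x hx => abs_of_nonpos (uIcc_of_le hc ▸ hx).2,
      intervalIntegral.integral_neg, integral_id]
    ring

lemma setIntegral_Iic_sub_setIntegral_Iic_zero_le {ν : Measure ℝ} {L : ℝ} (hL : 0 ≤ L)
    (hν : ν ≤ ENNReal.ofReal L • volume) (hint : Integrable (fun x => x) ν) (c : ℝ) :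
    ∫ x in Iic c, x ∂ν - ∫ x in Iic 0, x ∂ν ≤ L * (c ^ 2 / 2) := by
  rw [intervalIntegral.integral_Iic_sub_Iic hint.integrableOn hint.integrableOn]
  calc ∫ x in 0..c, x ∂ν ≤ ‖∫ x in 0..c, x ∂ν‖ := Real.le_norm_self _
    _ ≤ ∫ x in Ι 0 c, ‖x‖ ∂ν := intervalIntegral.norm_integral_le_integral_norm_uIoc
    _ ≤ ∫ x in Ι 0 c, |x| ∂(ENNReal.ofReal L • volume) :=
      integral_mono_measure (Measure.restrict_mono subset_rfl hν)
        (ae_of_all _ fun _ => abs_nonneg _)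
        (by
          rw [Measure.restrict_smul]
          exact continuous_abs.integrableOn_uIoc.integrable.smul_measure ENNReal.ofReal_ne_top)
    _ = L * (c ^ 2 / 2) := by
      rw [Measure.restrict_smul, integral_smul_measure, ENNReal.toReal_ofReal hL,
        integral_abs_uIoc_zero, smul_eq_mul]

theorem generalized_self_bounding_general
    {Ω : Type*} [MeasurableSpace Ω] {μ : Measure Ω}
    (ξ ζ : Ω → ℝ) (hξm : Measurable ξ) (hζm : Measurable ζ)
    (hindep : IndepFun ξ ζ μ)
    (hξint : Integrable ξ μ) (hζint : Integrable ζ μ)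
    (hξmean : ∫ ω, ξ ω ∂μ = 0) (hζmean : ∫ ω, ζ ω ∂μ = 0)
    (fξ fζ : ℝ → ℝ)
    (hdξ : Measure.map ξ μ = volume.withDensity (fun x => ENNReal.ofReal (fξ x)))
    (hdζ : Measure.map ζ μ = volume.withDensity (fun x => ENNReal.ofReal (fζ x)))
    (L : ℝ) (hL : 1 ≤ L)
    (hfξL : ∀ x, fξ x ≤ L) (hfζL : ∀ x, fζ x ≤ L)
    (m π : ℝ) :
    (∫ ω, gft m (m + ξ ω) (m + ζ ω) ∂μ) - (∫ ω, gft π (m + ξ ω) (m + ζ ω) ∂μ)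
      ≤ L * (m - π) ^ 2 := by
  have hlawξ : μ.map ξ ≤ ENNReal.ofReal L • volume := hdξ ▸ withDensity_ofReal_le_smul hfξL
  have hlawζ : μ.map ζ ≤ ENNReal.ofReal L • volume := hdζ ▸ withDensity_ofReal_le_smul hfζL
  have hgain (p : ℝ) : ∫ ω, gft p (m + ξ ω) (m + ζ ω) ∂μ
      = -∫ x in Iic (p - m), x ∂μ.map ξ - ∫ x in Iic (p - m), x ∂μ.map ζ := by
    simp_rw [gft_add_add]
    exact hindep.integral_gft hξm hζm hξint hζint hξmean hζmean
      (ae_ne_of_map_le_smul_volume hξm.aemeasurable hlawξ _)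
      (ae_ne_of_map_le_smul_volume hζm.aemeasurable hlawζ _)
  have hL0 : 0 ≤ L := zero_le_one.trans hL
  have hboundξ := setIntegral_Iic_sub_setIntegral_Iic_zero_le hL0 hlawξ
    ((integrable_map_measure aestronglyMeasurable_id hξm.aemeasurable).2 hξint) (π - m)
  have hboundζ := setIntegral_Iic_sub_setIntegral_Iic_zero_le hL0 hlawζ
    ((integrable_map_measure aestronglyMeasurable_id hζm.aemeasurable).2 hζint) (π - m)
  rw [hgain, hgain, sub_self]
  linear_combination hboundξ + hboundζ

/-- **Generalized self-bounding property** (Lemma 1).  If `ξ, ζ` are independent,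
zero-mean, integrable real random variables with Lebesgue densities bounded by `L ≥ 1`,
then for every `m, π ∈ ℝ`, with `V = m + ξ` and `W = m + ζ`,
`E[g(m,V,W)] − E[g(π,V,W)] ≤ L·(m − π)²`. -/
theorem generalized_self_bounding
    {Ω : Type*} [MeasurableSpace Ω] {μ : Measure Ω} [IsProbabilityMeasure μ]
    (ξ ζ : Ω → ℝ) (hξm : Measurable ξ) (hζm : Measurable ζ)
    (hindep : IndepFun ξ ζ μ)
    (hξint : Integrable ξ μ) (hζint : Integrable ζ μ)
    (hξmean : ∫ ω, ξ ω ∂μ = 0) (hζmean : ∫ ω, ζ ω ∂μ = 0)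
    (fξ fζ : ℝ → ℝ) (hfξm : Measurable fξ) (hfζm : Measurable fζ)
    (hdξ : Measure.map ξ μ = volume.withDensity (fun x => ENNReal.ofReal (fξ x)))
    (hdζ : Measure.map ζ μ = volume.withDensity (fun x => ENNReal.ofReal (fζ x)))
    (L : ℝ) (hL : 1 ≤ L)
    (hfξL : ∀ x, fξ x ≤ L) (hfζL : ∀ x, fζ x ≤ L)
    (m π : ℝ) :
    (∫ ω, gft m (m + ξ ω) (m + ζ ω) ∂μ) - (∫ ω, gft π (m + ξ ω) (m + ζ ω) ∂μ)
      ≤ L * (m - π) ^ 2 :=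
  generalized_self_bounding_general ξ ζ hξm hζm hindep hξint hζint hξmean hζmean fξ fζ hdξ hdζ L hL
    hfξL hfζL m π
end

section
/- Let ξ and ζ be independent real-valued random variables with E[ξ] = E[ζ] = 0, E[|ξ|] < ∞, E[|ζ|] < ∞, admitting Lebesgue densities f_ξ and f_ζ. Let ε > 0 and c₀ > 0 be such that f_ξ(s) + f_ζ(s) ≥ 2c₀ for Lebesgue-almost every s with |s| ≤ ε. Then for every m ∈ ℝ, E[g(m, m + ξ, m + ζ)] − E[g(m + ε, m + ξ, m + ζ)] ≥ c₀·ε². -/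
/-!
Translating by `m` reduces to comparing the prices `0` and `ε`. Off the null events
`ξ, ζ ∈ {0, ε}`, the loss from moving the price from `0` to `ε` is
`(ξ - ζ) (1{ξ ∈ (0, ε]} - 1{ζ ∈ (0, ε]})`. By independence and the zero means the cross terms
vanish, leaving `E[ξ; 0 < ξ ≤ ε] + E[ζ; 0 < ζ ≤ ε] = ∫_{(0, ε]} x (f_ξ + f_ζ)(x) dx`, which the
density bound makes at least `∫_0^ε 2 c₀ x dx = c₀ ε²`.
-/

open MeasureTheory ProbabilityTheory Set

lemma gft_add_add_add (m p v w : ℝ) : gft (m + p) (m + v) (m + w) = gft p v w := by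
  simp only [gft, min_add_add_left, max_add_add_left, add_le_add_iff_left,
    add_sub_add_left_eq_sub]

lemma abs_gft_le (p v w : ℝ) : |gft p v w| ≤ |v - w| := by
  unfold gft
  split_ifs
  · rw [max_sub_min_eq_abs', abs_abs]
  · simp

lemma measurable_gft (p : ℝ) : Measurable fun q : ℝ × ℝ => gft p q.1 q.2 :=
  Measurable.ite
    ((measurableSet_le (measurable_fst.min measurable_snd) measurable_const).inter
      (measurableSet_le measurable_const (measurable_fst.max measurable_snd)))
    (by fun_prop) measurable_const

lemma gft_zero_sub_gft {ε x y : ℝ} (hε : 0 ≤ ε) (hx₀ : x ≠ 0) (hxε : x ≠ ε) (hy₀ : y ≠ 0)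
    (hyε : y ≠ ε) :
    gft 0 x y - gft ε x y = (x - y) * ((Ioc 0 ε).indicator 1 x - (Ioc 0 ε).indicator 1 y) := by
  simp only [gft, indicator, mem_Ioc, Pi.one_apply]
  rcases le_total x y with h | h
  · simp only [min_eq_left h, max_eq_right h]
    split_ifs <;> grind
  · simp only [min_eq_right h, max_eq_left h]
    split_ifs <;> grind

section

variable {Ω : Type*} [MeasurableSpace Ω] {μ : Measure Ω} {X Y : Ω → ℝ}

lemma integrable_gft_comp (hX : Integrable X μ) (hY : Integrable Y μ) (p : ℝ) :
    Integrable (fun ω => gft p (X ω) (Y ω)) μ :=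
  (hX.sub' hY).mono ((measurable_gft p).comp_aemeasurable
      (hX.aemeasurable.prodMk hY.aemeasurable)).aestronglyMeasurable
    (ae_of_all _ fun ω => abs_gft_le p (X ω) (Y ω))

lemma ae_ne_of_map_absolutelyContinuous (hX : AEMeasurable X μ) (hac : μ.map X ≪ volume)
    (c : ℝ) : ∀ᵐ ω ∂μ, X ω ≠ c :=
  (ae_map_iff hX (measurableSet_singleton c).compl).mp
    (hac.ae_le (compl_mem_ae_iff.mpr (measure_singleton c)))

lemma integral_mul_comp_eq_zero (hXY : IndepFun X Y μ) (hX : AEStronglyMeasurable X μ)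
    (hY : AEMeasurable Y μ) (hX₀ : ∫ ω, X ω ∂μ = 0) {φ : ℝ → ℝ} (hφ : Measurable φ) :
    ∫ ω, X ω * φ (Y ω) ∂μ = 0 := by
  have := (hXY.comp measurable_id hφ).integral_mul_eq_mul_integral hX
    (hφ.comp_aemeasurable hY).aestronglyMeasurable
  simpa [hX₀] using this

lemma integral_sub_mul_sub_comp_of_indepFun (hXY : IndepFun X Y μ)
    (hX : Integrable X μ) (hY : Integrable Y μ)
    (hX₀ : ∫ ω, X ω ∂μ = 0) (hY₀ : ∫ ω, Y ω ∂μ = 0) {φ : ℝ → ℝ} (hφ : Measurable φ) {C : ℝ}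
    (hφC : ∀ x, ‖φ x‖ ≤ C) :
    ∫ ω, (X ω - Y ω) * (φ (X ω) - φ (Y ω)) ∂μ
      = ∫ ω, X ω * φ (X ω) ∂μ + ∫ ω, Y ω * φ (Y ω) ∂μ := by
  have hint (Z W : Ω → ℝ) (hZ : Integrable Z μ) (hW : AEMeasurable W μ) :
      Integrable (fun ω => Z ω * φ (W ω)) μ :=
    hZ.mul_bdd (hφ.comp_aemeasurable hW).aestronglyMeasurable
      (ae_of_all _ fun ω => hφC (W ω))
  have hXm := hX.aemeasurable
  have hYm := hY.aemeasurable
  simp only [sub_mul, mul_sub]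
  rw [integral_sub ((hint X X hX hXm).sub' (hint Y X hY hXm))
      ((hint X Y hX hYm).sub' (hint Y Y hY hYm)),
    integral_sub (hint X X hX hXm) (hint Y X hY hXm),
    integral_sub (hint X Y hX hYm) (hint Y Y hY hYm),
    integral_mul_comp_eq_zero hXY hX.1 hYm hX₀ hφ,
    integral_mul_comp_eq_zero hXY.symm hY.1 hXm hY₀ hφ]
  ring

lemma integral_mul_indicator_one_comp (hX : AEMeasurable X μ) {s : Set ℝ} (hs : MeasurableSet s) :
    ∫ ω, X ω * s.indicator 1 (X ω) ∂μ = ∫ x in s, x ∂μ.map X := by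
  rw [← integral_indicator hs, integral_map hX (by fun_prop)]
  congr 1 with ω
  by_cases h : X ω ∈ s <;> simp [h]

end

lemma smul_restrict_le_restrict_withDensity {α : Type*} [MeasurableSpace α] {ν : Measure α}
    {f : α → ENNReal} {s : Set α} (hs : MeasurableSet s) {a : ENNReal}
    (h : ∀ᵐ x ∂ν.restrict s, a ≤ f x) :
    a • ν.restrict s ≤ (ν.withDensity f).restrict s := by
  rw [restrict_withDensity hs, ← withDensity_const]
  exact withDensity_mono h

lemma le_setIntegral_Ioc_of_smul_volume_le {ν : Measure ℝ} {a ε : ℝ} (hε : 0 ≤ ε)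
    (hν : ENNReal.ofReal a • volume.restrict (Ioc 0 ε) ≤ ν.restrict (Ioc 0 ε))
    (hint : IntegrableOn (fun x => x) (Ioc 0 ε) ν) :
    a * ε ^ 2 / 2 ≤ ∫ x in Ioc 0 ε, x ∂ν := by
  have hmass :
      ∫ x, x ∂(ENNReal.ofReal a • volume.restrict (Ioc 0 ε)) = max a 0 * (ε ^ 2 / 2) := by
    rw [integral_smul_measure, ← intervalIntegral.integral_of_le hε, integral_id,
      ENNReal.toReal_ofReal', smul_eq_mul]
    ring
  calc a * ε ^ 2 / 2 ≤ max a 0 * (ε ^ 2 / 2) := by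
        rw [mul_div_assoc]; gcongr; exact le_max_left a 0
    _ = _ := hmass.symm
    _ ≤ ∫ x in Ioc 0 ε, x ∂ν := integral_mono_measure hν
          ((ae_restrict_mem measurableSet_Ioc).mono fun x hx => hx.1.le) hint

theorem reverse_self_bounding_general
    {Ω : Type*} [MeasurableSpace Ω] {μ : Measure Ω}
    (ξ ζ : Ω → ℝ)
    (hindep : IndepFun ξ ζ μ)
    (hξint : Integrable ξ μ) (hζint : Integrable ζ μ)
    (hξmean : ∫ ω, ξ ω ∂μ = 0) (hζmean : ∫ ω, ζ ω ∂μ = 0)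
    (fξ fζ : ℝ → ℝ) (hfξm : Measurable fξ)
    (hdξ : Measure.map ξ μ = volume.withDensity (fun x => ENNReal.ofReal (fξ x)))
    (hdζ : Measure.map ζ μ = volume.withDensity (fun x => ENNReal.ofReal (fζ x)))
    (ε c₀ : ℝ) (hε : 0 < ε)
    (hlower : ∀ᵐ s ∂(volume.restrict (Set.Icc (-ε) ε)), 2 * c₀ ≤ fξ s + fζ s)
    (m : ℝ) :
    c₀ * ε ^ 2 ≤
      (∫ ω, gft m (m + ξ ω) (m + ζ ω) ∂μ) - ∫ ω, gft (m + ε) (m + ξ ω) (m + ζ ω) ∂μ := by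
  have hshift : ∀ v w, gft m (m + v) (m + w) = gft 0 v w := by
    simpa using gft_add_add_add m 0
  have hne {X : Ω → ℝ} (hX : Integrable X μ) {f : ℝ → ℝ}
      (hd : μ.map X = volume.withDensity fun x => ENNReal.ofReal (f x)) (c : ℝ) :
      ∀ᵐ ω ∂μ, X ω ≠ c :=
    ae_ne_of_map_absolutelyContinuous hX.aemeasurable
      (hd ▸ withDensity_absolutelyContinuous _ _) c
  have hdiff : ∀ᵐ ω ∂μ, gft 0 (ξ ω) (ζ ω) - gft ε (ξ ω) (ζ ω)
      = (ξ ω - ζ ω) * ((Ioc 0 ε).indicator 1 (ξ ω) - (Ioc 0 ε).indicator 1 (ζ ω)) := by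
    filter_upwards [hne hξint hdξ 0, hne hξint hdξ ε, hne hζint hdζ 0, hne hζint hdζ ε]
      with ω hξ₀ hξε hζ₀ hζε
    exact gft_zero_sub_gft hε.le hξ₀ hξε hζ₀ hζε
  have hint_map {X : Ω → ℝ} (hX : Integrable X μ) :
      IntegrableOn (fun x => x) (Ioc 0 ε) (μ.map X) :=
    ((integrable_map_measure aestronglyMeasurable_id hX.aemeasurable).mpr hX).integrableOn
  have hdensity : ENNReal.ofReal (2 * c₀) • volume.restrict (Ioc 0 ε)
      ≤ (μ.map ξ + μ.map ζ).restrict (Ioc 0 ε) := by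
    rw [hdξ, hdζ, ← withDensity_add_left hfξm.ennreal_ofReal]
    refine smul_restrict_le_restrict_withDensity measurableSet_Ioc ?_
    filter_upwards [ae_restrict_of_ae_restrict_of_subset
      (Ioc_subset_Icc_self.trans (Icc_subset_Icc_left (by linarith))) hlower] with x hx
    exact (ENNReal.ofReal_le_ofReal hx).trans ENNReal.ofReal_add_le
  simp only [hshift, gft_add_add_add]
  rw [← integral_sub (integrable_gft_comp hξint hζint 0) (integrable_gft_comp hξint hζint ε),
    integral_congr_ae hdiff,
    integral_sub_mul_sub_comp_of_indepFun hindep hξint hζint hξmean hζmean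
      (measurable_one.indicator measurableSet_Ioc)
      (fun x => by simpa using norm_indicator_le_norm_self (1 : ℝ → ℝ) x),
    integral_mul_indicator_one_comp hξint.aemeasurable measurableSet_Ioc,
    integral_mul_indicator_one_comp hζint.aemeasurable measurableSet_Ioc,
    ← integral_add_measure (hint_map hξint) (hint_map hζint), ← Measure.restrict_add]
  linarith [le_setIntegral_Ioc_of_smul_volume_le hε.le hdensity
    ((hint_map hξint).add_measure (hint_map hζint))]

/-- **Reverse self-bounding property.**  If `ξ, ζ` are independent, zero-mean, integrable
random variables with Lebesgue densities `fξ, fζ` satisfying `fξ(s) + fζ(s) ≥ 2c₀` for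
a.e. `s` with `|s| ≤ ε` (where `ε, c₀ > 0`), then for every `m`,
`E[g(m, m+ξ, m+ζ)] − E[g(m+ε, m+ξ, m+ζ)] ≥ c₀·ε²`. -/
theorem reverse_self_bounding
    {Ω : Type*} [MeasurableSpace Ω] {μ : Measure Ω} [IsProbabilityMeasure μ]
    (ξ ζ : Ω → ℝ) (hξm : Measurable ξ) (hζm : Measurable ζ)
    (hindep : IndepFun ξ ζ μ)
    (hξint : Integrable ξ μ) (hζint : Integrable ζ μ)
    (hξmean : ∫ ω, ξ ω ∂μ = 0) (hζmean : ∫ ω, ζ ω ∂μ = 0)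
    (fξ fζ : ℝ → ℝ) (hfξm : Measurable fξ) (hfζm : Measurable fζ)
    (hdξ : Measure.map ξ μ = volume.withDensity (fun x => ENNReal.ofReal (fξ x)))
    (hdζ : Measure.map ζ μ = volume.withDensity (fun x => ENNReal.ofReal (fζ x)))
    (ε c₀ : ℝ) (hε : 0 < ε) (hc₀ : 0 < c₀)
    (hlower : ∀ᵐ s ∂(volume.restrict (Set.Icc (-ε) ε)), 2 * c₀ ≤ fξ s + fζ s)
    (m : ℝ) :
    c₀ * ε ^ 2 ≤
      (∫ ω, gft m (m + ξ ω) (m + ζ ω) ∂μ) - ∫ ω, gft (m + ε) (m + ξ ω) (m + ζ ω) ∂μ :=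
  reverse_self_bounding_general ξ ζ hindep hξint hζint hξmean hζmean fξ fζ hfξm hdξ hdζ ε c₀ hε
    hlower m
end

section
/- Let d ≥ 1, λ > 0, let Σ̂ and Σ be real symmetric d×d matrices with Σ̂ ⪰ (λ/2)·I_d (so Σ̂ is invertible), and let φ, μ̂ ∈ ℝ^d. Then ‖Σ̂⁻¹μ̂ − φ‖₂ ≤ (2/λ)·(√d·‖μ̂ − Σφ‖_∞ + ‖Σ − Σ̂‖_op·‖φ‖₂), where ‖·‖_op denotes the operator norm with respect to the Euclidean norm and ‖·‖_∞ the coordinate-wise maximum norm. -/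
/-!
Since `Σ̂ ⪰ (λ/2)·I`, we get `(λ/2)‖x‖² ≤ ⟪x, Σ̂x⟫ ≤ ‖x‖‖Σ̂x‖`, i.e. `‖x‖ ≤ (2/λ)‖Σ̂x‖`.
For `x = Σ̂⁻¹μ̂ − φ` we have `Σ̂x = (μ̂ − Σφ) + (Σ − Σ̂)φ`; the first term has Euclidean norm
at most `√d` times its sup norm, the second at most `‖Σ − Σ̂‖_op‖φ‖`.
-/

open scoped Matrix RealInnerProductSpace

theorem mul_norm_le_norm_of_mul_norm_sq_le_inner {E : Type*} [NormedAddCommGroup E]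
    [InnerProductSpace ℝ E] {c : ℝ} {x y : E} (h : c * ‖x‖ ^ 2 ≤ ⟪x, y⟫) : c * ‖x‖ ≤ ‖y‖ := by
  rcases (norm_nonneg x).eq_or_lt with hx | hx
  · simp [← hx]
  · refine le_of_mul_le_mul_right ?_ hx
    nlinarith [real_inner_le_norm x y]

theorem EuclideanSpace.norm_le_sqrt_card_mul_iSup_abs {ι : Type*} [Fintype ι]
    (x : EuclideanSpace ℝ ι) : ‖x‖ ≤ √(Fintype.card ι) * ⨆ i, |x i| := by
  simpa using (EuclideanSpace.basisFun ι ℝ).norm_le_card_mul_iSup_norm_inner x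

namespace Matrix

variable {n : Type*} [DecidableEq n] {A : Matrix n n ℝ} {c : ℝ}

theorem PosSemidef.posDef_of_sub_smul_one (hA : (A - c • 1).PosSemidef) (hc : 0 < c) :
    A.PosDef := by
  simpa using PosDef.posSemidef_add hA (PosDef.one.smul hc)

variable [Fintype n]

theorem PosSemidef.mul_norm_sq_le_inner_toEuclideanCLM (hA : (A - c • 1).PosSemidef)
    (x : EuclideanSpace ℝ n) : c * ‖x‖ ^ 2 ≤ ⟪x, toEuclideanCLM (𝕜 := ℝ) A x⟫ := by
  have h := hA.dotProduct_mulVec_nonneg (WithLp.ofLp x)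
  rw [star_trivial, ← inner_toEuclideanCLM, map_sub, map_smul, map_one] at h
  simpa [inner_sub_right, inner_smul_right, real_inner_self_eq_norm_sq] using h

theorem PosSemidef.mul_norm_le_norm_toEuclideanCLM (hA : (A - c • 1).PosSemidef)
    (x : EuclideanSpace ℝ n) : c * ‖x‖ ≤ ‖toEuclideanCLM (𝕜 := ℝ) A x‖ :=
  mul_norm_le_norm_of_mul_norm_sq_le_inner (hA.mul_norm_sq_le_inner_toEuclideanCLM x)

end Matrix

theorem plugin_estimator_error_bound_general
    (d : ℕ) (lam : ℝ) (hlam : 0 < lam)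
    (Sh S : Matrix (Fin d) (Fin d) ℝ)
    (hpsd : (Sh - (lam / 2) • (1 : Matrix (Fin d) (Fin d) ℝ)).PosSemidef)
    (φ μh : EuclideanSpace ℝ (Fin d)) :
    ‖(EuclideanSpace.equiv (Fin d) ℝ).symm (Sh⁻¹.mulVec μh) - φ‖
      ≤ (2 / lam) * (Real.sqrt d * (⨆ i, |μh i - S.mulVec φ i|)
          + ‖Matrix.toEuclideanCLM (𝕜 := ℝ) (S - Sh)‖ * ‖φ‖) := by
  set T := Matrix.toEuclideanCLM (n := Fin d) (𝕜 := ℝ)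
  set e := (EuclideanSpace.equiv (Fin d) ℝ).symm (Sh⁻¹.mulVec μh) - φ
  have hSh : Sh * Sh⁻¹ = 1 := Sh.mul_nonsing_inv <|
    (Sh.isUnit_iff_isUnit_det).1 (hpsd.posDef_of_sub_smul_one (by positivity)).isUnit
  have hTe : T Sh e = (μh - T S φ) + T (S - Sh) φ := by
    have : T Sh ((EuclideanSpace.equiv (Fin d) ℝ).symm (Sh⁻¹ *ᵥ μh)) = μh := by
      simp [T, EuclideanSpace.equiv, Matrix.mulVec_mulVec, hSh]
    simp only [e, map_sub, this, sub_apply]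
    abel
  have hresidual : ‖μh - T S φ‖ ≤ √d * ⨆ i, |μh i - S.mulVec φ i| := by
    simpa [T] using EuclideanSpace.norm_le_sqrt_card_mul_iSup_abs (μh - T S φ)
  have hcoercive : lam / 2 * ‖e‖ ≤ √d * (⨆ i, |μh i - S.mulVec φ i|) + ‖T (S - Sh)‖ * ‖φ‖ :=
    calc lam / 2 * ‖e‖ ≤ ‖T Sh e‖ := hpsd.mul_norm_le_norm_toEuclideanCLM e
      _ ≤ ‖μh - T S φ‖ + ‖T (S - Sh) φ‖ := hTe ▸ norm_add_le _ _
      _ ≤ _ := add_le_add hresidual ((T (S - Sh)).le_opNorm φ)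
  rw [div_mul_eq_mul_div, le_div_iff₀ hlam]
  linarith

/-- **Deterministic plug-in estimator bound.**  If `Σ̂ ⪰ (λ/2)·I_d` (so `Σ̂` is
invertible), then for all `φ, μ̂ ∈ ℝ^d`,
`‖Σ̂⁻¹μ̂ − φ‖₂ ≤ (2/λ)·(√d·‖μ̂ − Σφ‖_∞ + ‖Σ − Σ̂‖_op·‖φ‖₂)`,
where `‖·‖_op` is the operator norm w.r.t. the Euclidean norm and `‖·‖_∞` the
coordinate-wise maximum norm. -/
theorem plugin_estimator_error_bound
    (d : ℕ) (hd : 1 ≤ d) (lam : ℝ) (hlam : 0 < lam)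
    (Sh S : Matrix (Fin d) (Fin d) ℝ) (hShsym : Sh.IsSymm) (hSsym : S.IsSymm)
    (hpsd : (Sh - (lam / 2) • (1 : Matrix (Fin d) (Fin d) ℝ)).PosSemidef)
    (φ μh : EuclideanSpace ℝ (Fin d)) :
    ‖(EuclideanSpace.equiv (Fin d) ℝ).symm (Sh⁻¹.mulVec μh) - φ‖
      ≤ (2 / lam) * (Real.sqrt d * (⨆ i, |μh i - S.mulVec φ i|)
          + ‖Matrix.toEuclideanCLM (𝕜 := ℝ) (S - Sh)‖ * ‖φ‖) :=
  plugin_estimator_error_bound_general d lam hlam Sh S hpsd φ μh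
end
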